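/- Consider a single LSTM layer with cell update c⁺ = f∘c + i∘r, where f = σ(W_f u + U_f h + b_f), i = σ(W_i u + U_i h + b_i), r = φ(W_r u + U_r h + b_r). Define σ̄_f = σ(M_f), σ̄_i = σ(M_i), φ̄_r = tanh(M_r) with M_* the maximum row ℓ¹ norm of [W_* U_* b_*], c̄ = σ̄_i φ̄_r/(1−σ̄_f), ᾱ = (1/4) c̄ ‖U_f‖₂ + σ̄_i ‖U_r‖₂ + (1/4) φ̄_r ‖U_i‖₂, and β̄ = (1/4) c̄ ‖W_f‖₂ + σ̄_i ‖W_r‖₂ + (1/4) φ̄_r ‖W_i‖₂. Then for any two triples (c_a, h_a, u_a) and (c_b, h_b, u_b) with ‖c_a‖∞ ≤ c̄, ‖c_b‖∞ ≤ c̄, ‖h_a‖∞ ≤ 1, ‖h_b‖∞ ≤ 1, ‖u_a‖∞ ≤ 1, ‖u_b‖∞ ≤ 1, the updated cell states satisfy ‖c_a⁺ − c_b⁺‖₂ ≤ σ̄_f ‖c_a − c_b‖₂ + ᾱ ‖h_a − h_b‖₂ + β̄ ‖u_a − u_b‖₂. -/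

import Mathlib

/-- The sigmoid activation function `σ(x) = 1/(1+e^{-x})`. -/
noncomputable def sigm (x : ℝ) : ℝ := 1 / (1 + Real.exp (-x))

/-- The maximum over rows of the ℓ¹ norm of the rows of the augmented matrix `[W U b]`. -/
noncomputable def augRowMax {n m p : ℕ} (W : Matrix (Fin n) (Fin m) ℝ)
    (U : Matrix (Fin n) (Fin p) ℝ) (b : Fin n → ℝ) : ℝ :=
  ⨆ j, (∑ i, |W j i| + ∑ i, |U j i| + |b j|)

/-- The Euclidean norm of a vector in `ℝ^n`. -/
noncomputable def norm2 {n : ℕ} (v : Fin n → ℝ) : ℝ := Real.sqrt (∑ i, (v i) ^ 2)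

/-- The spectral (induced 2-) norm of a real matrix. -/
noncomputable def opNorm2 {n m : ℕ} (A : Matrix (Fin n) (Fin m) ℝ) : ℝ :=
  ‖LinearMap.toContinuousLinearMap (Matrix.toEuclideanLin A)‖

/-!
Write `c_a⁺ − c_b⁺ = f_a∘(c_a − c_b) + c_b∘(f_a − f_b) + i_a∘(r_a − r_b) + r_b∘(i_a − i_b)`.
For inputs in the unit `ℓ∞` ball every pre-activation lies in `[−M, M]`, so the gates `f_a`, `i_a`,
`r_b` are bounded entrywise by `σ̄_f`, `σ̄_i`, `φ̄_r`. The gate differences are controlled because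
`σ' = σ(1 − σ) ≤ 1/4` and `tanh x = 2σ(2x) − 1` is `1`-Lipschitz, and the pre-activation
differences by spectral norms.
-/

open Real NNReal Matrix

lemma sigm_eq_sigmoid : sigm = sigmoid := by
  funext x
  rw [sigm, sigmoid_def, one_div]

lemma lipschitzWith_sigmoid : LipschitzWith 4⁻¹ sigmoid := by
  refine lipschitzWith_of_nnnorm_deriv_le differentiable_sigmoid fun x => ?_
  rw [deriv_sigmoid, ← NNReal.coe_le_coe, coe_nnnorm, Real.norm_eq_abs,
    abs_of_nonneg (mul_nonneg (sigmoid_nonneg x) (sub_nonneg.2 (sigmoid_le_one x)))]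
  push_cast
  nlinarith [sq_nonneg (sigmoid x - 2⁻¹)]

lemma tanh_eq_two_mul_sigmoid_sub_one (x : ℝ) : tanh x = 2 * sigmoid (2 * x) - 1 := by
  have hexp : exp (-(2 * x)) * exp x = exp (-x) := by rw [← exp_add]; ring_nf
  rw [tanh_eq, sigmoid_def, ← hexp]
  field_simp
  ring

lemma tanh_monotone : Monotone tanh := fun x y hxy => by
  simp only [tanh_eq_two_mul_sigmoid_sub_one]
  linarith [sigmoid_monotone (by linarith : 2 * x ≤ 2 * y)]

lemma lipschitzWith_tanh : LipschitzWith 1 tanh := by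
  refine LipschitzWith.of_dist_le_mul fun x y => ?_
  have h := lipschitzWith_sigmoid.dist_le_mul (2 * x) (2 * y)
  simp only [tanh_eq_two_mul_sigmoid_sub_one, Real.dist_eq] at h ⊢
  rw [show 2 * x - 2 * y = 2 * (x - y) by ring, abs_mul] at h
  rw [show 2 * sigmoid (2 * x) - 1 - (2 * sigmoid (2 * y) - 1)
      = 2 * (sigmoid (2 * x) - sigmoid (2 * y)) by ring, abs_mul]
  norm_num at h ⊢
  linarith

lemma abs_sigmoid_le {x M : ℝ} (h : |x| ≤ M) : |sigmoid x| ≤ sigmoid M := by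
  rw [abs_of_nonneg (sigmoid_nonneg x)]
  exact sigmoid_monotone ((le_abs_self x).trans h)

lemma abs_tanh_le {x M : ℝ} (h : |x| ≤ M) : |tanh x| ≤ tanh M := by
  rw [abs_le] at h ⊢
  exact ⟨by rw [← tanh_neg]; exact tanh_monotone h.1, tanh_monotone h.2⟩

lemma tanh_nonneg {x : ℝ} (hx : 0 ≤ x) : 0 ≤ tanh x :=
  tanh_zero ▸ tanh_monotone hx

section norm2

variable {n : ℕ}

lemma norm2_eq_norm (v : Fin n → ℝ) : norm2 v = ‖WithLp.toLp 2 v‖ := by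
  simp [norm2, EuclideanSpace.norm_eq]

lemma norm2_add_le (u v : Fin n → ℝ) : norm2 (fun j => u j + v j) ≤ norm2 u + norm2 v := by
  simp only [norm2_eq_norm]
  exact norm_add_le _ _

lemma norm2_le_mul_of_abs_le {u v : Fin n → ℝ} {M : ℝ} (hM : 0 ≤ M)
    (h : ∀ j, |u j| ≤ M * |v j|) : norm2 u ≤ M * norm2 v := by
  unfold norm2
  rw [← Real.sqrt_sq hM, ← Real.sqrt_mul (sq_nonneg M), Finset.mul_sum]
  gcongr with j
  rw [← sq_abs (u j), ← sq_abs (v j), ← mul_pow]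
  gcongr
  exact h j

lemma norm2_mul_le_of_abs_le {s v : Fin n → ℝ} {M : ℝ} (hs : ∀ j, |s j| ≤ M) :
    norm2 (fun j => s j * v j) ≤ M * norm2 v := by
  rcases isEmpty_or_nonempty (Fin n) with _ | ⟨⟨j₀⟩⟩
  · simp [norm2]
  refine norm2_le_mul_of_abs_le ((abs_nonneg _).trans (hs j₀)) fun j => ?_
  rw [abs_mul]
  exact mul_le_mul_of_nonneg_right (hs j) (abs_nonneg _)

lemma norm2_comp_sub_le {g : ℝ → ℝ} {K : ℝ≥0} (hg : LipschitzWith K g) (x y : Fin n → ℝ) :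
    norm2 (fun j => g (x j) - g (y j)) ≤ K * norm2 (fun j => x j - y j) :=
  norm2_le_mul_of_abs_le K.2 fun j => by
    simpa only [Real.dist_eq] using hg.dist_le_mul (x j) (y j)

lemma norm2_mulVec_le {m : ℕ} (A : Matrix (Fin n) (Fin m) ℝ) (x : Fin m → ℝ) :
    norm2 (A *ᵥ x) ≤ opNorm2 A * norm2 x := by
  simp only [norm2_eq_norm]
  exact (Matrix.toEuclideanLin A).toContinuousLinearMap.le_opNorm (WithLp.toLp 2 x)

lemma norm2_affine_sub_le {m p : ℕ} (W : Matrix (Fin n) (Fin m) ℝ) (U : Matrix (Fin n) (Fin p) ℝ)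
    (b : Fin n → ℝ) (u u' : Fin m → ℝ) (h h' : Fin p → ℝ) :
    norm2 (fun j => (W *ᵥ u + U *ᵥ h + b) j - (W *ᵥ u' + U *ᵥ h' + b) j) ≤
      opNorm2 W * norm2 (fun j => u j - u' j) + opNorm2 U * norm2 (fun j => h j - h' j) := by
  have hsplit : (fun j => (W *ᵥ u + U *ᵥ h + b) j - (W *ᵥ u' + U *ᵥ h' + b) j) =
      fun j => (W *ᵥ (u - u')) j + (U *ᵥ (h - h')) j := by
    funext j
    simp only [Matrix.mulVec_sub, Pi.add_apply, Pi.sub_apply]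
    ring
  rw [hsplit]
  exact (norm2_add_le _ _).trans (add_le_add (norm2_mulVec_le W _) (norm2_mulVec_le U _))

end norm2

section augRowMax

variable {n m p : ℕ} (W : Matrix (Fin n) (Fin m) ℝ) (U : Matrix (Fin n) (Fin p) ℝ) (b : Fin n → ℝ)

lemma augRowMax_nonneg : 0 ≤ augRowMax W U b :=
  Real.iSup_nonneg (f := fun j => ∑ i, |W j i| + ∑ i, |U j i| + |b j|) fun _ => by positivity

lemma abs_mulVec_apply_le {u : Fin m → ℝ} (hu : ‖u‖ ≤ 1) (j : Fin n) :
    |(W *ᵥ u) j| ≤ ∑ i, |W j i| := by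
  simp only [mulVec, dotProduct]
  refine (Finset.abs_sum_le_sum_abs _ _).trans (Finset.sum_le_sum fun i _ => ?_)
  rw [abs_mul]
  exact mul_le_of_le_one_right (abs_nonneg _) ((norm_le_pi_norm u i).trans hu)

lemma abs_affine_apply_le_augRowMax {u : Fin m → ℝ} {h : Fin p → ℝ} (hu : ‖u‖ ≤ 1)
    (hh : ‖h‖ ≤ 1) (j : Fin n) : |(W *ᵥ u + U *ᵥ h + b) j| ≤ augRowMax W U b :=
  calc |(W *ᵥ u) j + (U *ᵥ h) j + b j|
      ≤ |(W *ᵥ u) j| + |(U *ᵥ h) j| + |b j| := abs_add_three _ _ _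
    _ ≤ ∑ i, |W j i| + ∑ i, |U j i| + |b j| := by
      gcongr
      exacts [abs_mulVec_apply_le W hu j, abs_mulVec_apply_le U hh j]
    _ ≤ augRowMax W U b := le_ciSup (f := fun j => ∑ i, |W j i| + ∑ i, |U j i| + |b j|)
      (Set.finite_range _).bddAbove j

end augRowMax

lemma norm2_gate_sub_le {n m p : ℕ} {g : ℝ → ℝ} {K : ℝ≥0} (hg : LipschitzWith K g)
    (W : Matrix (Fin n) (Fin m) ℝ) (U : Matrix (Fin n) (Fin p) ℝ) (b : Fin n → ℝ)
    (u u' : Fin m → ℝ) (h h' : Fin p → ℝ) :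
    norm2 (fun j => g ((W *ᵥ u + U *ᵥ h + b) j) - g ((W *ᵥ u' + U *ᵥ h' + b) j)) ≤
      K * (opNorm2 W * norm2 (fun j => u j - u' j) + opNorm2 U * norm2 (fun j => h j - h' j)) :=
  (norm2_comp_sub_le hg _ _).trans
    (mul_le_mul_of_nonneg_left (norm2_affine_sub_le W U b u u' h h') K.2)

lemma norm2_cell_update_sub_le {n : ℕ} {f f' i i' r r' c c' : Fin n → ℝ} {F C I R : ℝ}
    (hf : ∀ j, |f j| ≤ F) (hc' : ∀ j, |c' j| ≤ C) (hi : ∀ j, |i j| ≤ I) (hr' : ∀ j, |r' j| ≤ R) :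
    norm2 (fun j => (f j * c j + i j * r j) - (f' j * c' j + i' j * r' j)) ≤
      F * norm2 (fun j => c j - c' j) + C * norm2 (fun j => f j - f' j) +
        I * norm2 (fun j => r j - r' j) + R * norm2 (fun j => i j - i' j) := by
  have hsplit : (fun j => (f j * c j + i j * r j) - (f' j * c' j + i' j * r' j)) =
      fun j => (f j * (c j - c' j) + c' j * (f j - f' j)) +
        (i j * (r j - r' j) + r' j * (i j - i' j)) := by
    funext j
    ring
  rw [hsplit, add_assoc]
  refine (norm2_add_le _ _).trans (add_le_add ((norm2_add_le _ _).trans ?_)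
    ((norm2_add_le _ _).trans ?_))
  · exact add_le_add (norm2_mul_le_of_abs_le hf) (norm2_mul_le_of_abs_le hc')
  · exact add_le_add (norm2_mul_le_of_abs_le hi) (norm2_mul_le_of_abs_le hr')

theorem stmt_9_general {nc nu : ℕ}
    (Wf Wi Wr : Matrix (Fin nc) (Fin nu) ℝ)
    (Uf Ui Ur : Matrix (Fin nc) (Fin nc) ℝ)
    (bf bi br : Fin nc → ℝ)
    (σf σi φr cbar αbar βbar : ℝ)
    (hσf : σf = sigm (augRowMax Wf Uf bf))
    (hσi : σi = sigm (augRowMax Wi Ui bi))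
    (hφr : φr = Real.tanh (augRowMax Wr Ur br))
    (hαbar : αbar = (1 / 4) * cbar * opNorm2 Uf + σi * opNorm2 Ur + (1 / 4) * φr * opNorm2 Ui)
    (hβbar : βbar = (1 / 4) * cbar * opNorm2 Wf + σi * opNorm2 Wr + (1 / 4) * φr * opNorm2 Wi)
    (ca cb ha hb : Fin nc → ℝ) (ua ub : Fin nu → ℝ)
    (hca : ‖ca‖ ≤ cbar) (hcb : ‖cb‖ ≤ cbar)
    (hha : ‖ha‖ ≤ 1) (hhb : ‖hb‖ ≤ 1)
    (hua : ‖ua‖ ≤ 1) (hub : ‖ub‖ ≤ 1)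
    (caplus cbplus : Fin nc → ℝ)
    (hcaplus : caplus = fun j =>
      sigm ((Wf.mulVec ua + Uf.mulVec ha + bf) j) * ca j +
      sigm ((Wi.mulVec ua + Ui.mulVec ha + bi) j) *
        Real.tanh ((Wr.mulVec ua + Ur.mulVec ha + br) j))
    (hcbplus : cbplus = fun j =>
      sigm ((Wf.mulVec ub + Uf.mulVec hb + bf) j) * cb j +
      sigm ((Wi.mulVec ub + Ui.mulVec hb + bi) j) *
        Real.tanh ((Wr.mulVec ub + Ur.mulVec hb + br) j)) :
    norm2 (fun j => caplus j - cbplus j) ≤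
      σf * norm2 (fun j => ca j - cb j) + αbar * norm2 (fun j => ha j - hb j) +
        βbar * norm2 (fun j => ua j - ub j) := by
  subst hcaplus hcbplus hαbar hβbar
  rw [sigm_eq_sigmoid] at hσf hσi ⊢
  have hσi0 : 0 ≤ σi := hσi ▸ sigmoid_nonneg _
  have hφr0 : 0 ≤ φr := hφr ▸ tanh_nonneg (augRowMax_nonneg Wr Ur br)
  have hcbar0 : 0 ≤ cbar := (norm_nonneg ca).trans hca
  have hF := norm2_gate_sub_le lipschitzWith_sigmoid Wf Uf bf ua ub ha hb
  have hR := norm2_gate_sub_le lipschitzWith_tanh Wr Ur br ua ub ha hb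
  have hI := norm2_gate_sub_le lipschitzWith_sigmoid Wi Ui bi ua ub ha hb
  refine (norm2_cell_update_sub_le
    (fun j => hσf ▸ abs_sigmoid_le (abs_affine_apply_le_augRowMax Wf Uf bf hua hha j))
    (fun j => (norm_le_pi_norm cb j).trans hcb)
    (fun j => hσi ▸ abs_sigmoid_le (abs_affine_apply_le_augRowMax Wi Ui bi hua hha j))
    (fun j => hφr ▸ abs_tanh_le (abs_affine_apply_le_augRowMax Wr Ur br hub hhb j))).trans ?_
  push_cast at hF hR hI
  linarith [mul_le_mul_of_nonneg_left hF hcbar0, mul_le_mul_of_nonneg_left hR hσi0,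
    mul_le_mul_of_nonneg_left hI hφr0]

/-- Incremental bound on the LSTM cell-state update `c⁺ = f∘c + i∘r`:
`‖c_a⁺ − c_b⁺‖₂ ≤ σ̄_f ‖c_a − c_b‖₂ + ᾱ ‖h_a − h_b‖₂ + β̄ ‖u_a − u_b‖₂`. -/
theorem stmt_9 {nc nu : ℕ}
    (Wf Wi Wr : Matrix (Fin nc) (Fin nu) ℝ)
    (Uf Ui Ur : Matrix (Fin nc) (Fin nc) ℝ)
    (bf bi br : Fin nc → ℝ)
    (σf σi φr cbar αbar βbar : ℝ)
    (hσf : σf = sigm (augRowMax Wf Uf bf))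
    (hσi : σi = sigm (augRowMax Wi Ui bi))
    (hφr : φr = Real.tanh (augRowMax Wr Ur br))
    (hcbar : cbar = σi * φr / (1 - σf))
    (hαbar : αbar = (1 / 4) * cbar * opNorm2 Uf + σi * opNorm2 Ur + (1 / 4) * φr * opNorm2 Ui)
    (hβbar : βbar = (1 / 4) * cbar * opNorm2 Wf + σi * opNorm2 Wr + (1 / 4) * φr * opNorm2 Wi)
    (ca cb ha hb : Fin nc → ℝ) (ua ub : Fin nu → ℝ)
    (hca : ‖ca‖ ≤ cbar) (hcb : ‖cb‖ ≤ cbar)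
    (hha : ‖ha‖ ≤ 1) (hhb : ‖hb‖ ≤ 1)
    (hua : ‖ua‖ ≤ 1) (hub : ‖ub‖ ≤ 1)
    (caplus cbplus : Fin nc → ℝ)
    (hcaplus : caplus = fun j =>
      sigm ((Wf.mulVec ua + Uf.mulVec ha + bf) j) * ca j +
      sigm ((Wi.mulVec ua + Ui.mulVec ha + bi) j) *
        Real.tanh ((Wr.mulVec ua + Ur.mulVec ha + br) j))
    (hcbplus : cbplus = fun j =>
      sigm ((Wf.mulVec ub + Uf.mulVec hb + bf) j) * cb j +
      sigm ((Wi.mulVec ub + Ui.mulVec hb + bi) j) *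
        Real.tanh ((Wr.mulVec ub + Ur.mulVec hb + br) j)) :
    norm2 (fun j => caplus j - cbplus j) ≤
      σf * norm2 (fun j => ca j - cb j) + αbar * norm2 (fun j => ha j - hb j) +
        βbar * norm2 (fun j => ua j - ub j) :=
  stmt_9_general Wf Wi Wr Uf Ui Ur bf bi br σf σi φr cbar αbar βbar hσf hσi hφr hαbar hβbar ca cb ha
    hb ua ub hca hcb hha hhb hua hub caplus cbplus hcaplus hcbplus
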